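/- Let S_n = ∑_{k=1}^n Z_k where Z_k = D_k(n-D_k) are the cyclic increment weights of a uniformly random cyclic listing of {0,...,n-1}. Then E[S_n] = n²(n+1)/6 and Var(S_n) = n²(n+1)(n-2)(n-3)/180. -/

import Mathlib

open Filter

/-- Cyclic rank increment `D_k = (π_{k+1} - π_k) mod n` of the cyclic listing `σ`. -/
def cycD (n : ℕ) [NeZero n] (σ : Equiv.Perm (Fin n)) (k : Fin n) : ℕ :=
  ((σ (k + 1) - σ k : Fin n) : ℕ)

/-- The edge weight `Z_k = D_k (n - D_k)`. -/
noncomputable def cycZ (n : ℕ) [NeZero n] (σ : Equiv.Perm (Fin n)) (k : Fin n) : ℝ :=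
  (cycD n σ k : ℝ) * ((n : ℝ) - (cycD n σ k : ℝ))

/-- Expectation with respect to the uniform distribution on all `n!` cyclic listings. -/
noncomputable def permE (n : ℕ) (f : Equiv.Perm (Fin n) → ℝ) : ℝ :=
  (∑ σ : Equiv.Perm (Fin n), f σ) / (Nat.factorial n : ℝ)

/-!
Write `Z_k = h (π (k + 1) - π k)` with `h d = d (n - d)` on `Fin n`, so that `h 0 = 0` and
`h (-d) = h d`. Since the symmetric group acts transitively on injective `m`-tuples, the values of a
uniform permutation at `m` fixed distinct positions form a uniform injective `m`-tuple. Hence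
`E[Z_k]`, `E[Z_k²]`, `E[Z_k Z_{k+1}]` and `E[Z_k Z_l]` (`l` not adjacent to `k`) are averages of
products of `h` over distinct 2-, 3- and 4-tuples. Summing out one coordinate at a time and using
translation invariance reduces these averages to `∑ h = n (n² - 1) / 6` and
`∑ h² = n (n⁴ - 1) / 30`. Expanding `S² = ∑_{k,l} Z_k Z_l` then gives the variance.
-/

theorem MulAction.card_nsmul_sum_smul_eq {G Y M : Type*} [Group G] [Fintype G] [MulAction G Y]
    [Fintype Y] [MulAction.IsPretransitive G Y] [AddCommMonoid M] (F : Y → M) (x : Y) :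
    Fintype.card Y • ∑ g : G, F (g • x) = Fintype.card G • ∑ y, F y := by
  have key : ∀ y : Y, ∑ g : G, F (g • y) = ∑ g : G, F (g • x) := by
    intro y
    obtain ⟨h, rfl⟩ := MulAction.exists_smul_eq G x y
    exact Fintype.sum_equiv (Equiv.mulRight h) _ _ fun g => by simp [mul_smul]
  calc Fintype.card Y • ∑ g : G, F (g • x) = ∑ y : Y, ∑ g : G, F (g • y) := by
        simp [key, Finset.card_univ]
    _ = ∑ g : G, ∑ y : Y, F (g • y) := Finset.sum_comm
    _ = ∑ g : G, ∑ y : Y, F y :=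
        Finset.sum_congr rfl fun g _ => Fintype.sum_equiv (MulAction.toPerm g) _ _ fun _ => rfl
    _ = Fintype.card G • ∑ y, F y := by simp [Finset.card_univ]

theorem Fin.sum_embedding_succ {α R : Type*} [Fintype α] [DecidableEq α] [AddCommGroup R] (m : ℕ)
    (F : (Fin (m + 1) → α) → R) :
    ∑ e : Fin (m + 1) ↪ α, F e
      = ∑ f : Fin m ↪ α, (∑ i, F (Matrix.vecCons i f) - ∑ j, F (Matrix.vecCons (f j) f)) := by
  rw [← (Equiv.embeddingFinSucc m α).symm.sum_comp, Fintype.sum_sigma]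
  refine Fintype.sum_congr _ _ fun f => ?_
  rw [eq_sub_iff_add_eq, ← Fintype.sum_subtype_add_sum_subtype (· ∉ Set.range f)]
  simp only [Equiv.coe_embeddingFinSucc_symm]
  congr 1
  exact Fintype.sum_equiv ((Equiv.ofInjective f f.injective).trans
    (Equiv.subtypeEquivRight fun _ => not_not.symm)) _ _ fun _ => rfl

theorem Fintype.sum_apply_sub_left {G R : Type*} [AddGroup G] [Fintype G] [AddCommMonoid R]
    (h : G → R) (a : G) : ∑ x, h (a - x) = ∑ x, h x :=
  Fintype.sum_equiv (Equiv.subLeft a) _ _ fun _ => rfl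

theorem Fintype.sum_eq_add_add_add_nsmul {ι M : Type*} [Fintype ι] [DecidableEq ι]
    [AddCommMonoid M] {f : ι → M} {a b c : ι} {C : M} (hab : a ≠ b) (hac : a ≠ c) (hbc : b ≠ c)
    (hf : ∀ x, x ≠ a → x ≠ b → x ≠ c → f x = C) :
    ∑ x, f x = f a + f b + f c + (Fintype.card ι - 3) • C := by
  have habc : a ∉ ({b, c} : Finset ι) := by simp [hab, hac]
  have hcompl : ∀ x ∈ ({a, b, c} : Finset ι)ᶜ, f x = C := fun x hx => by
    simp only [Finset.mem_compl, Finset.mem_insert, Finset.mem_singleton, not_or] at hx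
    exact hf x hx.1 hx.2.1 hx.2.2
  rw [← Finset.sum_add_sum_compl {a, b, c}, Finset.sum_insert habc, Finset.sum_pair hbc,
    Finset.sum_congr rfl hcompl, Finset.sum_const, Finset.card_compl,
    Finset.card_insert_of_notMem habc, Finset.card_pair hbc]
  simp only [add_assoc]

theorem sum_range_mul_sub (x : ℝ) (N : ℕ) :
    ∑ i ∈ Finset.range N, (i : ℝ) * (x - i) = N * (N - 1) * (3 * x - 2 * N + 1) / 6 := by
  induction N with
  | zero => simp
  | succ N ih => rw [Finset.sum_range_succ, ih]; push_cast; ring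

theorem sum_range_mul_sub_sq (x : ℝ) (N : ℕ) :
    ∑ i ∈ Finset.range N, ((i : ℝ) * (x - i)) ^ 2
      = N * (N - 1) * (10 * x ^ 2 * (2 * N - 1) - 30 * x * N * (N - 1)
          + 2 * (2 * N - 1) * (3 * N ^ 2 - 3 * N - 1)) / 60 := by
  induction N with
  | zero => simp
  | succ N ih => rw [Finset.sum_range_succ, ih]; push_cast; ring

theorem Fin.add_one_ne_self {n : ℕ} [NeZero n] (hn : 2 ≤ n) (k : Fin n) : k + 1 ≠ k := by
  rw [Ne, add_eq_left, Fin.ext_iff]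
  simp [Nat.mod_eq_of_lt (show 1 < n by omega)]

theorem Fin.add_one_add_one_ne_self {n : ℕ} [NeZero n] (hn : 3 ≤ n) (k : Fin n) :
    k + 1 + 1 ≠ k := by
  rw [add_assoc, Ne, add_eq_left, Fin.ext_iff]
  simp [Fin.val_add, Nat.mod_eq_of_lt (show 1 < n by omega),
    Nat.mod_eq_of_lt (show 2 < n by omega)]

section Differences

variable {G R : Type*} [AddCommGroup G] [Fintype G] [DecidableEq G] [CommRing R] {h : G → R}

theorem sum_embedding_two_sub (h0 : h 0 = 0) :
    ∑ e : Fin 2 ↪ G, h (e 1 - e 0) = Fintype.card G * ∑ x, h x := by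
  rw [Fin.sum_embedding_succ 1 fun e => h (e 1 - e 0)]
  simp [Fintype.sum_apply_sub_left, h0, Fintype.card_embedding_eq]

theorem sum_embedding_three_sub_mul_sub (h0 : h 0 = 0) (hneg : ∀ x, h (-x) = h x) :
    ∑ e : Fin 3 ↪ G, h (e 1 - e 0) * h (e 2 - e 1)
      = Fintype.card G * ((∑ x, h x) ^ 2 - ∑ x, h x ^ 2) := by
  have step : ∀ f : Fin 2 ↪ G,
      ∑ i, h (f 0 - i) * h (f 1 - f 0) - ∑ j, h (f 0 - f j) * h (f 1 - f 0)
        = (∑ x, h x) * h (f 1 - f 0) - h (f 1 - f 0) ^ 2 := by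
    intro f
    rw [← Finset.sum_mul, Fintype.sum_apply_sub_left, Fin.sum_univ_two, ← neg_sub (f 1), hneg]
    simp only [sub_self, h0, zero_mul, zero_add]; ring
  rw [Fin.sum_embedding_succ 2 fun e => h (e 1 - e 0) * h (e 2 - e 1)]
  simp only [Matrix.cons_val_zero, Matrix.cons_val_one, Matrix.cons_val_two, Matrix.vecHead,
    Matrix.vecTail, Function.comp_apply, Fin.succ_zero_eq_one, step, Finset.sum_sub_distrib,
    ← Finset.mul_sum, sum_embedding_two_sub h0,
    sum_embedding_two_sub (h := fun x => h x ^ 2) (by simp [h0])]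
  ring

theorem sum_embedding_four_sub_mul_sub (h0 : h 0 = 0) (hneg : ∀ x, h (-x) = h x) :
    ∑ e : Fin 4 ↪ G, h (e 1 - e 0) * h (e 3 - e 2)
      = Fintype.card G * ((Fintype.card G - 4) * (∑ x, h x) ^ 2 + 2 * ∑ x, h x ^ 2) := by
  have hsymm : ∀ x y, h (x - y) = h (y - x) := fun x y => by rw [← neg_sub, hneg]
  have step₁ : ∀ f : Fin 3 ↪ G,
      ∑ i, h (f 0 - i) * h (f 2 - f 1) - ∑ j, h (f 0 - f j) * h (f 2 - f 1)
        = ((∑ x, h x) - h (f 1 - f 0) - h (f 2 - f 0)) * h (f 2 - f 1) := by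
    intro f
    rw [← Finset.sum_mul, Fintype.sum_apply_sub_left, Fin.sum_univ_three, hsymm (f 0) (f 1),
      hsymm (f 0) (f 2)]
    simp only [sub_self, h0, zero_mul, zero_add]; ring
  have step₂ : ∀ f : Fin 2 ↪ G,
      ∑ i, ((∑ x, h x) - h (f 0 - i) - h (f 1 - i)) * h (f 1 - f 0)
        - ∑ j, ((∑ x, h x) - h (f 0 - f j) - h (f 1 - f j)) * h (f 1 - f 0)
        = (Fintype.card G - 4) * (∑ x, h x) * h (f 1 - f 0) + 2 * h (f 1 - f 0) ^ 2 := by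
    intro f
    rw [← Finset.sum_mul, Finset.sum_sub_distrib, Finset.sum_sub_distrib,
      Fintype.sum_apply_sub_left, Fintype.sum_apply_sub_left, Fin.sum_univ_two, hsymm (f 0) (f 1)]
    simp only [Finset.sum_const, Finset.card_univ, nsmul_eq_mul, sub_self, h0, sub_zero]
    ring
  rw [Fin.sum_embedding_succ 3 fun e => h (e 1 - e 0) * h (e 3 - e 2)]
  simp only [Matrix.cons_val_zero, Matrix.cons_val_one, Matrix.cons_val_two, Matrix.cons_val_three,
    Matrix.vecHead, Matrix.vecTail, Function.comp_apply, Fin.succ_zero_eq_one, Fin.succ_one_eq_two,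
    step₁]
  rw [Fin.sum_embedding_succ 2 fun e =>
    ((∑ x, h x) - h (e 1 - e 0) - h (e 2 - e 0)) * h (e 2 - e 1)]
  simp only [Matrix.cons_val_zero, Matrix.cons_val_one, Matrix.cons_val_two,
    Matrix.vecHead, Matrix.vecTail, Function.comp_apply, Fin.succ_zero_eq_one, step₂,
    Finset.sum_add_distrib, ← Finset.mul_sum, sum_embedding_two_sub h0,
    sum_embedding_two_sub (h := fun x => h x ^ 2) (by simp [h0])]
  ring

end Differences

section Permutations

variable {n : ℕ}

theorem permE_sum {ι : Type*} (s : Finset ι) (f : ι → Equiv.Perm (Fin n) → ℝ) :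
    permE n (fun σ => ∑ i ∈ s, f i σ) = ∑ i ∈ s, permE n (f i) := by
  simp only [permE, Finset.sum_comm (s := s), Finset.sum_div]

theorem permE_sub_const_sq (f : Equiv.Perm (Fin n) → ℝ) (c : ℝ) :
    permE n (fun σ => (f σ - c) ^ 2)
      = permE n (fun σ => f σ ^ 2) - 2 * c * permE n f + c ^ 2 := by
  have : (n.factorial : ℝ) ≠ 0 := Nat.cast_ne_zero.mpr n.factorial_ne_zero
  simp only [permE, sub_sq, Finset.sum_add_distrib, Finset.sum_sub_distrib, ← Finset.sum_mul,
    ← Finset.mul_sum, Finset.sum_const, Finset.card_univ, Fintype.card_perm, Fintype.card_fin,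
    nsmul_eq_mul]
  field_simp

theorem permE_comp_smul {m : ℕ} (v : Fin m ↪ Fin n) (F : (Fin m ↪ Fin n) → ℝ) :
    permE n (fun σ => F (σ • v)) = (∑ w, F w) / n.descFactorial m := by
  have hd : (n.descFactorial m : ℝ) ≠ 0 := by
    simpa [Nat.descFactorial_eq_zero_iff_lt] using Fintype.card_le_of_embedding v
  have := Equiv.Perm.isMultiplyPretransitive (Fin n) m
  have key := MulAction.card_nsmul_sum_smul_eq (G := Equiv.Perm (Fin n)) F v
  simp only [Fintype.card_embedding_eq, Fintype.card_perm, Fintype.card_fin, nsmul_eq_mul] at key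
  unfold permE
  field_simp
  linarith

variable [NeZero n] {h : Fin n → ℝ}

theorem permE_apply_add_one_sub (hn : 2 ≤ n) (h0 : h 0 = 0) (k : Fin n) :
    permE n (fun σ => h (σ (k + 1) - σ k)) = (∑ x, h x) / (n - 1) := by
  have hk : Function.Injective ![k, k + 1] := by
    have := Fin.add_one_ne_self hn k
    intro i j; fin_cases i <;> fin_cases j <;> simp [this, this.symm]
  have := permE_comp_smul ⟨_, hk⟩ fun w => h (w 1 - w 0)
  rw [sum_embedding_two_sub h0, Nat.cast_descFactorial_two] at this
  simp only [Function.Embedding.smul_apply, Equiv.Perm.smul_def, Function.Embedding.coeFn_mk,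
    Matrix.cons_val_zero, Matrix.cons_val_one, Fintype.card_fin] at this
  rw [this, mul_div_mul_left _ _ (Nat.cast_ne_zero.mpr (NeZero.ne n))]

theorem permE_apply_add_one_sub_mul_next (hn : 3 ≤ n) (h0 : h 0 = 0) (hneg : ∀ x, h (-x) = h x)
    (k : Fin n) :
    permE n (fun σ => h (σ (k + 1) - σ k) * h (σ (k + 1 + 1) - σ (k + 1)))
      = ((∑ x, h x) ^ 2 - ∑ x, h x ^ 2) / ((n - 1) * (n - 2)) := by
  have hk : Function.Injective ![k, k + 1, k + 1 + 1] := by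
    have h₁ := Fin.add_one_ne_self (by omega) k
    have h₂ := Fin.add_one_ne_self (by omega) (k + 1)
    have h₃ := Fin.add_one_add_one_ne_self hn k
    intro i j; fin_cases i <;> fin_cases j <;> simp [h₁, h₂, h₃, h₁.symm, h₂.symm, h₃.symm]
  have := permE_comp_smul ⟨_, hk⟩ fun w => h (w 1 - w 0) * h (w 2 - w 1)
  rw [sum_embedding_three_sub_mul_sub h0 hneg, Nat.descFactorial_succ, Nat.cast_mul,
    Nat.cast_descFactorial_two, Nat.cast_sub (by omega)] at this
  simp only [Function.Embedding.smul_apply, Equiv.Perm.smul_def, Function.Embedding.coeFn_mk,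
    Matrix.cons_val_zero, Matrix.cons_val_one, Matrix.cons_val_two, Matrix.head_cons,
    Matrix.tail_cons, Fintype.card_fin] at this
  have hn0 : (n : ℝ) ≠ 0 := Nat.cast_ne_zero.mpr (NeZero.ne n)
  rw [this]
  field_simp
  ring

theorem permE_apply_add_one_sub_mul_of_disjoint (hn : 4 ≤ n) (h0 : h 0 = 0)
    (hneg : ∀ x, h (-x) = h x) {k l : Fin n} (hlk : l ≠ k) (hlk₁ : l ≠ k + 1) (hkl₁ : k ≠ l + 1) :
    permE n (fun σ => h (σ (k + 1) - σ k) * h (σ (l + 1) - σ l))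
      = ((n - 4) * (∑ x, h x) ^ 2 + 2 * ∑ x, h x ^ 2) / ((n - 1) * (n - 2) * (n - 3)) := by
  have hk : Function.Injective ![k, k + 1, l, l + 1] := by
    have h₁ := Fin.add_one_ne_self (by omega) k
    have h₂ := Fin.add_one_ne_self (by omega) l
    have h₃ : k + 1 ≠ l + 1 := fun h => hlk (add_right_cancel h).symm
    intro i j
    fin_cases i <;> fin_cases j <;>
      simp [h₁, h₂, h₃, hlk, hlk₁, hkl₁, h₁.symm, h₂.symm, h₃.symm, hlk.symm, hlk₁.symm,
        hkl₁.symm]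
  have := permE_comp_smul ⟨_, hk⟩ fun w => h (w 1 - w 0) * h (w 3 - w 2)
  rw [sum_embedding_four_sub_mul_sub h0 hneg, Nat.descFactorial_succ, Nat.descFactorial_succ,
    Nat.cast_mul, Nat.cast_mul, Nat.cast_descFactorial_two, Nat.cast_sub (by omega),
    Nat.cast_sub (by omega)] at this
  simp only [Function.Embedding.smul_apply, Equiv.Perm.smul_def, Function.Embedding.coeFn_mk,
    Matrix.cons_val_zero, Matrix.cons_val_one, Matrix.cons_val_two, Matrix.cons_val_three,
    Matrix.head_cons, Matrix.tail_cons, Fintype.card_fin] at this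
  have hn0 : (n : ℝ) ≠ 0 := Nat.cast_ne_zero.mpr (NeZero.ne n)
  rw [this]
  field_simp
  push_cast
  ring

end Permutations

section CyclicWeight

variable {n : ℕ} [NeZero n]

noncomputable def cycWeight (n : ℕ) [NeZero n] (d : Fin n) : ℝ :=
  (d : ℕ) * ((n : ℝ) - (d : ℕ))

theorem cycZ_eq_cycWeight (σ : Equiv.Perm (Fin n)) (k : Fin n) :
    cycZ n σ k = cycWeight n (σ (k + 1) - σ k) := rfl

theorem cycWeight_zero : cycWeight n 0 = 0 := by simp [cycWeight]

theorem cycWeight_neg (d : Fin n) : cycWeight n (-d) = cycWeight n d := by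
  rcases eq_or_ne d 0 with rfl | hd
  · simp
  have hval : ((-d : Fin n) : ℕ) = n - d := by
    have : (d : ℕ) ≠ 0 := fun h => hd (Fin.ext h)
    rw [Fin.val_neg', Nat.mod_eq_of_lt (by omega)]
  simp only [cycWeight, hval, Nat.cast_sub d.isLt.le]
  ring

theorem sum_cycWeight : ∑ d, cycWeight n d = n * ((n : ℝ) ^ 2 - 1) / 6 := by
  simp only [cycWeight]
  rw [Fin.sum_univ_eq_sum_range (fun i => (i : ℝ) * (n - i)), sum_range_mul_sub]
  ring

theorem sum_cycWeight_sq : ∑ d, cycWeight n d ^ 2 = n * ((n : ℝ) ^ 4 - 1) / 30 := by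
  simp only [cycWeight]
  rw [Fin.sum_univ_eq_sum_range (fun i => ((i : ℝ) * (n - i)) ^ 2), sum_range_mul_sub_sq]
  ring

end CyclicWeight

section Moments

variable {n : ℕ} [NeZero n]

theorem permE_cycZ (hn : 2 ≤ n) (k : Fin n) :
    permE n (fun σ => cycZ n σ k) = n * (n + 1) / 6 := by
  simp only [cycZ_eq_cycWeight, permE_apply_add_one_sub hn cycWeight_zero, sum_cycWeight]
  have : (n : ℝ) - 1 ≠ 0 := sub_ne_zero.mpr (by norm_cast; omega)
  field_simp
  ring

theorem permE_cycZ_mul_self (hn : 2 ≤ n) (k : Fin n) :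
    permE n (fun σ => cycZ n σ k * cycZ n σ k) = n * (n + 1) * (n ^ 2 + 1) / 30 := by
  simp only [cycZ_eq_cycWeight, ← sq]
  rw [permE_apply_add_one_sub (h := fun d => cycWeight n d ^ 2) hn (by simp [cycWeight_zero]),
    sum_cycWeight_sq]
  have : (n : ℝ) - 1 ≠ 0 := sub_ne_zero.mpr (by norm_cast; omega)
  field_simp
  ring

theorem permE_cycZ_mul_add_one (hn : 3 ≤ n) (k : Fin n) :
    permE n (fun σ => cycZ n σ k * cycZ n σ (k + 1))
      = n * (n + 1) * (5 * n ^ 2 + 4 * n + 3) / 180 := by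
  simp only [cycZ_eq_cycWeight]
  rw [permE_apply_add_one_sub_mul_next hn cycWeight_zero cycWeight_neg, sum_cycWeight,
    sum_cycWeight_sq]
  have : (n : ℝ) - 1 ≠ 0 := sub_ne_zero.mpr (by norm_cast; omega)
  have : (n : ℝ) - 2 ≠ 0 := sub_ne_zero.mpr (by norm_cast; omega)
  field_simp
  ring

theorem permE_cycZ_mul_of_disjoint (hn : 4 ≤ n) {k l : Fin n} (hlk : l ≠ k) (hlk₁ : l ≠ k + 1)
    (hkl₁ : k ≠ l + 1) :
    permE n (fun σ => cycZ n σ k * cycZ n σ l)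
      = n * (n + 1) * (5 * n ^ 2 + 5 * n + 2) / 180 := by
  simp only [cycZ_eq_cycWeight]
  rw [permE_apply_add_one_sub_mul_of_disjoint hn cycWeight_zero cycWeight_neg hlk hlk₁ hkl₁,
    sum_cycWeight, sum_cycWeight_sq]
  have : (n : ℝ) - 1 ≠ 0 := sub_ne_zero.mpr (by norm_cast; omega)
  have : (n : ℝ) - 2 ≠ 0 := sub_ne_zero.mpr (by norm_cast; omega)
  have : (n : ℝ) - 3 ≠ 0 := sub_ne_zero.mpr (by norm_cast; omega)
  field_simp
  ring

theorem permE_sum_cycZ (hn : 2 ≤ n) :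
    permE n (fun σ => ∑ k, cycZ n σ k) = n ^ 2 * (n + 1) / 6 := by
  simp only [permE_sum, permE_cycZ hn, Finset.sum_const, Finset.card_univ, Fintype.card_fin,
    nsmul_eq_mul]
  ring

theorem sum_permE_cycZ_mul (hn : 4 ≤ n) (k : Fin n) :
    ∑ l, permE n (fun σ => cycZ n σ k * cycZ n σ l)
      = n * (n + 1) * (5 * n ^ 3 + 6 * n ^ 2 - 5 * n + 6) / 180 := by
  have h₁ := Fin.add_one_ne_self (by omega) k
  have h₂ : k - 1 ≠ k := by
    have := Fin.add_one_ne_self (by omega) (k - 1)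
    rwa [sub_add_cancel, ne_comm] at this
  have h₃ : k + 1 ≠ k - 1 := by
    have := Fin.add_one_add_one_ne_self (by omega) (k - 1)
    rwa [sub_add_cancel] at this
  have hpred : permE n (fun σ => cycZ n σ k * cycZ n σ (k - 1))
      = permE n (fun σ => cycZ n σ (k - 1) * cycZ n σ (k - 1 + 1)) := by
    simp only [sub_add_cancel, mul_comm]
  rw [Fintype.sum_eq_add_add_add_nsmul h₁.symm h₂.symm h₃ fun l hlk hlk₁ hlk₂ =>
      permE_cycZ_mul_of_disjoint hn hlk hlk₁ (fun h => hlk₂ (eq_sub_of_add_eq h.symm)),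
    hpred, permE_cycZ_mul_self (by omega), permE_cycZ_mul_add_one (by omega),
    permE_cycZ_mul_add_one (by omega), Fintype.card_fin, nsmul_eq_mul, Nat.cast_sub (by omega)]
  push_cast
  ring

theorem permE_sum_cycZ_sq (hn : 4 ≤ n) :
    permE n (fun σ => (∑ k, cycZ n σ k) ^ 2)
      = n ^ 2 * (n + 1) * (5 * n ^ 3 + 6 * n ^ 2 - 5 * n + 6) / 180 := by
  simp only [sq, Finset.sum_mul_sum, permE_sum, sum_permE_cycZ_mul hn, Finset.sum_const,
    Finset.card_univ, Fintype.card_fin, nsmul_eq_mul]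
  ring

end Moments

/-- for `S_n = ∑_k Z_k` over a uniformly random cyclic listing,
`E[S_n] = n²(n+1)/6` and `Var(S_n) = n²(n+1)(n-2)(n-3)/180`. -/
theorem stmt13 (n : ℕ) [NeZero n] (hn : 4 ≤ n) :
    (permE n (fun σ => ∑ k : Fin n, cycZ n σ k) = (n : ℝ) ^ 2 * ((n : ℝ) + 1) / 6) ∧
    (permE n (fun σ => ((∑ k : Fin n, cycZ n σ k) - (n : ℝ) ^ 2 * ((n : ℝ) + 1) / 6) ^ 2)
      = (n : ℝ) ^ 2 * ((n : ℝ) + 1) * ((n : ℝ) - 2) * ((n : ℝ) - 3) / 180) := by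
  refine ⟨permE_sum_cycZ (by omega), ?_⟩
  rw [permE_sub_const_sq, permE_sum_cycZ_sq hn, permE_sum_cycZ (by omega)]
  ring
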